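/- Let a ≠ b be distinct positive integers, (sₖ)_{k≥1} positive integers, and define the points x_ℓ as the symmetric matrices M_k^t M'_{k-1} for ℓ = ℓ_k + t, 1 ≤ t ≤ s_{k+1}, with ℓ_k = s₂ + ⋯ + s_k. Then for every k ≥ 3, the point x_{ℓ_{k-1}} and the s_{k+1}+1 consecutive points x_{ℓ_k+1}, ..., x_{ℓ_{k+1}+1} all lie on one projective line in P²; equivalently, any three of these points have vanishing 3×3 determinant. Moreover the Cayley–Hamilton relation gives x_{ℓ_k+t+2} = trace(M_k)·x_{ℓ_k+t+1} ± x_{ℓ_k+t}. -/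
import Mathlib


/-- The matrix associated to a word over distinct positive integers. -/
def wordMatrix (m : List ℤ) : Matrix (Fin 2) (Fin 2) ℤ :=
  (m.map fun ℓ => !![ℓ, 1; 1, 0]).prod

/-- The triple `(x₀, x₁, x₂)` associated to a symmetric matrix `(x₀ x₁; x₁ x₂)`. -/
def triple (N : Matrix (Fin 2) (Fin 2) ℤ) : Fin 3 → ℤ :=
  ![N 0 0, N 0 1, N 1 1]



lemma ch2 (M : Matrix (Fin 2) (Fin 2) ℤ) :
    M ^ 2 = M.trace • M - M.det • (1 : Matrix (Fin 2) (Fin 2) ℤ) := by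
  ext i j
  simp only [pow_two, Matrix.mul_apply, Fin.sum_univ_two, Matrix.sub_apply,
    Matrix.smul_apply, smul_eq_mul, Matrix.trace_fin_two, Matrix.one_apply,
    Matrix.det_fin_two]
  fin_cases i <;> fin_cases j <;> simp <;> ring

lemma pow_span (M : Matrix (Fin 2) (Fin 2) ℤ) (t : ℕ) :
    ∃ p q : ℤ, M ^ t = p • (1 : Matrix (Fin 2) (Fin 2) ℤ) + q • M := by
  induction t with
  | zero => exact ⟨1, 0, by simp⟩
  | succ t ih =>
    obtain ⟨p, q, h⟩ := ih
    refine ⟨-q * M.det, p + q * M.trace, ?_⟩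
    rw [pow_succ, h, add_mul, Matrix.smul_mul, Matrix.smul_mul, one_mul,
      ← pow_two, ch2 M]
    ext i j
    simp only [Matrix.add_apply, Matrix.sub_apply, Matrix.smul_apply, smul_eq_mul,
      Matrix.one_apply]
    by_cases hij : i = j <;> simp [hij] <;> ring

lemma wm_det (l : List ℤ) : (wordMatrix l).det = (-1 : ℤ) ^ l.length := by
  induction l with
  | nil => simp [wordMatrix]
  | cons x l ih =>
    have h : wordMatrix (x :: l) = !![x, 1; 1, 0] * wordMatrix l := by
      simp [wordMatrix]
    rw [h, Matrix.det_mul, ih]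
    simp [Matrix.det_fin_two_of, pow_succ]

lemma triple_lin (A B : Matrix (Fin 2) (Fin 2) ℤ) (p q : ℤ) :
    triple (p • A + q • B) = p • triple A + q • triple B := by
  funext i
  fin_cases i <;>
    simp only [triple, Pi.add_apply, Pi.smul_apply, Matrix.add_apply,
      Matrix.smul_apply, smul_eq_mul, Matrix.cons_val_zero, Matrix.cons_val_one,
      Matrix.head_cons, Matrix.cons_val_two, Matrix.tail_cons, Fin.isValue] <;> rfl

lemma coll (v w : Fin 3 → ℤ) (p₁ q₁ p₂ q₂ p₃ q₃ : ℤ) :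
    (Matrix.of ![p₁ • v + q₁ • w, p₂ • v + q₂ • w, p₃ • v + q₃ • w]).det = 0 := by
  simp [Matrix.det_fin_three]
  ring

/-- Lemma 7.1 (i): for the Sturmian words `m_k` on distinct positive integers
`a ≠ b`, the point `x_{ℓ_{k-1}} = M'_{k-1}` and the `s_{k+1}+1` consecutive
points `x_{ℓ_k+1}, ..., x_{ℓ_{k+1}+1}`, i.e. all points `M_k^t M'_{k-1}` for
`0 ≤ t ≤ s_{k+1}+1`, lie on one projective line: any three of them have
vanishing `3×3` determinant.  Moreover Cayley–Hamilton gives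
`x_{t+2} = trace(M_k)·x_{t+1} ± x_t` (the sign being `-det(M_k) = ±1`). -/
theorem stmt19 (a b : ℤ) (ha : 0 < a) (hb : 0 < b) (hab : a ≠ b)
    (s : ℕ → ℕ) (hs : ∀ k, 1 ≤ s k) (m : ℕ → List ℤ)
    (hm0 : m 0 = [b]) (hm1 : m 1 = List.replicate (s 1 - 1) b ++ [a])
    (hmr : ∀ k : ℕ, 1 ≤ k →
      m (k + 1) = (List.replicate (s (k + 1)) (m k)).flatten ++ m (k - 1)) :
    ∀ k : ℕ, 3 ≤ k →
      (∀ t₁ t₂ t₃ : ℕ, t₁ ≤ s (k + 1) + 1 → t₂ ≤ s (k + 1) + 1 →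
        t₃ ≤ s (k + 1) + 1 →
        (Matrix.of
          ![triple (wordMatrix (m k) ^ t₁ *
              wordMatrix ((m (k - 1)).dropLast.dropLast)),
            triple (wordMatrix (m k) ^ t₂ *
              wordMatrix ((m (k - 1)).dropLast.dropLast)),
            triple (wordMatrix (m k) ^ t₃ *
              wordMatrix ((m (k - 1)).dropLast.dropLast))]).det = 0) ∧
      (∀ t : ℕ,
        wordMatrix (m k) ^ (t + 2) * wordMatrix ((m (k - 1)).dropLast.dropLast) =
          Matrix.trace (wordMatrix (m k)) •
            (wordMatrix (m k) ^ (t + 1) *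
              wordMatrix ((m (k - 1)).dropLast.dropLast)) -
          (wordMatrix (m k)).det •
            (wordMatrix (m k) ^ t *
              wordMatrix ((m (k - 1)).dropLast.dropLast))) ∧
      ((wordMatrix (m k)).det = 1 ∨ (wordMatrix (m k)).det = -1) := by
  intro k _
  set M := wordMatrix (m k) with hM
  set N := wordMatrix ((m (k - 1)).dropLast.dropLast) with hN
  have e : ∀ p q : ℤ, (p • (1 : Matrix (Fin 2) (Fin 2) ℤ) + q • M) * N
      = p • N + q • (M * N) := by
    intro p q
    rw [add_mul, Matrix.smul_mul, Matrix.smul_mul, one_mul]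
  refine ⟨?_, ?_, ?_⟩
  · intro t₁ t₂ t₃ _ _ _
    obtain ⟨p₁, q₁, h₁⟩ := pow_span M t₁
    obtain ⟨p₂, q₂, h₂⟩ := pow_span M t₂
    obtain ⟨p₃, q₃, h₃⟩ := pow_span M t₃
    rw [h₁, h₂, h₃, e, e, e, triple_lin, triple_lin, triple_lin]
    exact coll _ _ _ _ _ _ _ _
  · intro t
    have h : M ^ (t + 2) = M.trace • M ^ (t + 1) - M.det • M ^ t := by
      rw [show t + 2 = 2 + t from Nat.add_comm _ _, pow_add, ch2 M, sub_mul,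
        Matrix.smul_mul, Matrix.smul_mul, one_mul, ← pow_succ']
    rw [h, sub_mul, Matrix.smul_mul, Matrix.smul_mul]
  · rw [hM, wm_det]
    exact neg_one_pow_eq_or ℤ _
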